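/- Dipole approximation of the field of a circular current loop: fix μ₀ > 0 and J ∈ ℝ, let ρ > 0, a ∈ ℝ³, and let the loop be γ(t) := a + ρ(cos t, sin t, 0) for t ∈ [0, 2π], carrying current J, with Biot–Savart field B(x) := (μ₀ J / 4π) ∫₀^{2π} γ'(t) × (x − γ(t)) / |x − γ(t)|³ dt for x off the loop. Set the dipole moment α := π ρ² J e₃, where e₃ = (0,0,1). Then there exists a constant C > 0, independent of ρ, a, J, μ₀ and x, such that for all x ∈ ℝ³ with |x − a| ≥ 2ρ, |B(x) − (μ₀/4π) D(x − a) α| ≤ C μ₀ |J| ρ⁴ / |x − a|⁵. -/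

import Mathlib

open Matrix

/-- Euclidean norm of a vector in `ℝ^d`. -/
noncomputable def enorm' {d : ℕ} (v : Fin d → ℝ) : ℝ := Real.sqrt (∑ i, v i ^ 2)

/-- The dipole matrix `D(v) = 3 v vᵀ / |v|⁵ − I / |v|³`. -/
noncomputable def Dmat {d : ℕ} (v : Fin d → ℝ) : Matrix (Fin d) (Fin d) ℝ :=
  (3 / enorm' v ^ 5) • Matrix.vecMulVec v v
    - (enorm' v ^ 3)⁻¹ • (1 : Matrix (Fin d) (Fin d) ℝ)

/-!
Put `R = x - a`, `r = |R|` and `c(t) = (cos t, sin t, 0)`. Pairing each point of the loop with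
its antipode `t + π`, the Biot–Savart integrand averages to
`ρ (f₋ - f₊)/2 • (c'(t) × R) + ρ² (f₋ + f₊)/2 • e₃`, where `f± = |R ± ρ c(t)|⁻³`.
Write `|R ∓ ρ c|² = r² (1 ∓ 2ω + ε²)` with `ε = ρ/r` and `ω = ρ (c ⬝ R)/r²`. Although the
scaled distances `u, v` differ from `1` by `O(ε)`, their sum and product are within `ε²` of
`2` and `1`; expressing `u⁻³ ∓ v⁻³` through `u + v` and `u v` gives
`f₋ - f₊ = 6ρ (c ⬝ R)/r⁵ + O(ρ³/r⁶)` and `f₋ + f₊ = 2/r³ + O(ρ²/r⁵)`.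
The leading terms are trigonometric quadratics in `t` whose integral over a period is exactly
`π ρ² D(R) e₃`, and the remainders contribute `O(ρ⁴/r⁵)`.
-/

open Real MeasureTheory

local notation "e₃" => ![(0 : ℝ), 0, 1]

section EuclideanNorm

variable {d : ℕ}

lemma enorm'_eq_norm (v : Fin d → ℝ) : enorm' v = ‖WithLp.toLp 2 v‖ := by
  simp [enorm', EuclideanSpace.norm_eq]

lemma enorm'_nonneg (v : Fin d → ℝ) : 0 ≤ enorm' v := Real.sqrt_nonneg _

lemma sq_enorm' (v : Fin d → ℝ) : enorm' v ^ 2 = v ⬝ᵥ v := by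
  rw [enorm', Real.sq_sqrt (by positivity)]
  simp [dotProduct, sq]

lemma enorm'_add_le (v w : Fin d → ℝ) : enorm' (v + w) ≤ enorm' v + enorm' w := by
  simpa only [enorm'_eq_norm, WithLp.toLp_add] using norm_add_le _ _

lemma enorm'_sub_enorm'_le (v w : Fin d → ℝ) : enorm' v - enorm' w ≤ enorm' (v - w) := by
  simpa only [enorm'_eq_norm, WithLp.toLp_sub] using norm_sub_norm_le _ _

lemma enorm'_smul (c : ℝ) (v : Fin d → ℝ) : enorm' (c • v) = |c| * enorm' v := by
  simp only [enorm'_eq_norm, WithLp.toLp_smul, norm_smul, Real.norm_eq_abs]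

lemma continuous_enorm' : Continuous (enorm' (d := d)) := by
  simp only [funext enorm'_eq_norm]
  fun_prop

lemma abs_dotProduct_le (v w : Fin d → ℝ) : |v ⬝ᵥ w| ≤ enorm' v * enorm' w := by
  simpa [enorm'_eq_norm, EuclideanSpace.inner_toLp_toLp, dotProduct_comm]
    using abs_real_inner_le_norm (WithLp.toLp 2 v) (WithLp.toLp 2 w)

lemma sq_enorm'_sub (v w : Fin d → ℝ) :
    enorm' (v - w) ^ 2 = enorm' v ^ 2 - 2 * (v ⬝ᵥ w) + enorm' w ^ 2 := by
  simp only [sq_enorm', sub_dotProduct, dotProduct_sub, dotProduct_comm w v]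
  ring

lemma enorm'_intervalIntegral_le {f : ℝ → Fin d → ℝ} {a b C : ℝ}
    (hf : IntervalIntegrable f volume a b) (hC : ∀ t ∈ Set.uIoc a b, enorm' (f t) ≤ C) :
    enorm' (∫ t in a..b, f t) ≤ C * |b - a| := by
  have hcomm := (PiLp.continuousLinearEquiv 2 ℝ fun _ : Fin d => ℝ).symm.toContinuousLinearMap
    |>.intervalIntegral_comp_comm hf
  simp only [ContinuousLinearEquiv.coe_coe, PiLp.coe_symm_continuousLinearEquiv] at hcomm
  rw [enorm'_eq_norm, ← hcomm]
  exact intervalIntegral.norm_integral_le_of_norm_le_const fun t ht =>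
    enorm'_eq_norm (f t) ▸ hC t ht

lemma Dmat_mulVec (v w : Fin d → ℝ) :
    Dmat v *ᵥ w = (3 * (v ⬝ᵥ w) / enorm' v ^ 5) • v - (enorm' v ^ 3)⁻¹ • w := by
  rw [Dmat, sub_mulVec, smul_mulVec, smul_mulVec, vecMulVec_mulVec, one_mulVec, op_smul_eq_smul,
    smul_smul]
  module

end EuclideanNorm

@[fun_prop]
lemma Continuous.crossProduct {α : Type*} [TopologicalSpace α] {f g : α → Fin 3 → ℝ}
    (hf : Continuous f) (hg : Continuous g) : Continuous fun x => f x ⨯₃ g x := by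
  simp only [cross_apply]
  fun_prop

lemma enorm'_crossProduct_le (v w : Fin 3 → ℝ) : enorm' (v ⨯₃ w) ≤ enorm' v * enorm' w := by
  rw [← pow_le_pow_iff_left₀ (enorm'_nonneg _) (mul_nonneg (enorm'_nonneg _) (enorm'_nonneg _))
    two_ne_zero, mul_pow, sq_enorm', sq_enorm', sq_enorm', cross_dot_cross, dotProduct_comm w v]
  nlinarith [mul_self_nonneg (v ⬝ᵥ w)]

lemma Function.Periodic.intervalIntegral_eq_integral_average_shift {E : Type*}
    [NormedAddCommGroup E] [NormedSpace ℝ E] {f : ℝ → E} {T : ℝ} (hf : Function.Periodic f T)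
    (hfc : Continuous f) (s : ℝ) :
    ∫ t in (0 : ℝ)..T, f t = ∫ t in (0 : ℝ)..T, (2 : ℝ)⁻¹ • (f t + f (t + s)) := by
  have hshift : ∫ t in (0 : ℝ)..T, f (t + s) = ∫ t in (0 : ℝ)..T, f t := by
    simpa [add_comm] using hf.intervalIntegral_add_eq s 0
  have hint : IntervalIntegrable (fun t => f (t + s)) volume 0 T :=
    (hfc.comp (continuous_add_const s)).intervalIntegrable _ _
  rw [intervalIntegral.integral_smul,
    intervalIntegral.integral_add (hfc.intervalIntegrable _ _) hint, hshift, ← two_smul ℝ,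
    smul_smul, inv_mul_cancel₀ two_ne_zero, one_smul]

lemma integral_trig_quadratic {E : Type*} [NormedAddCommGroup E] [NormedSpace ℝ E]
    [CompleteSpace E] (X Y Z : E) :
    ∫ t in (0 : ℝ)..2 * π, (cos t ^ 2 • X + (sin t * cos t) • Y + sin t ^ 2 • Z) = π • (X + Z) := by
  have hint {g : ℝ → ℝ} (hg : Continuous g) (V : E) :
      IntervalIntegrable (fun t => g t • V) volume 0 (2 * π) :=
    (hg.smul continuous_const).intervalIntegrable _ _
  rw [intervalIntegral.integral_add ((hint (by fun_prop) X).add (hint (by fun_prop) Y))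
      (hint (by fun_prop) Z),
    intervalIntegral.integral_add (hint (by fun_prop) X) (hint (by fun_prop) Y)]
  simp only [intervalIntegral.integral_smul_const, integral_cos_sq, integral_sin_sq,
    integral_sin_mul_cos₁, sin_two_pi, cos_zero, sin_zero]
  module

section InverseCubeExpansion

variable {u v ε ω : ℝ}

lemma one_sub_sq_le_mul_le_one_add_sq (hu : 0 < u) (hv : 0 < v)
    (hu2 : u ^ 2 = 1 - 2 * ω + ε ^ 2) (hv2 : v ^ 2 = 1 + 2 * ω + ε ^ 2) (hω : ω ^ 2 ≤ ε ^ 2) :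
    1 - ε ^ 2 ≤ u * v ∧ u * v ≤ 1 + ε ^ 2 := by
  have hm2 : (u * v) ^ 2 = (1 + ε ^ 2) ^ 2 - 4 * ω ^ 2 := by
    rw [mul_pow, hu2, hv2]; ring
  have hm : 0 < u * v := mul_pos hu hv
  constructor <;> nlinarith

lemma two_le_add_le_two_add_sq (hu : 0 < u) (hv : 0 < v)
    (hu2 : u ^ 2 = 1 - 2 * ω + ε ^ 2) (hv2 : v ^ 2 = 1 + 2 * ω + ε ^ 2) (hω : ω ^ 2 ≤ ε ^ 2) :
    2 ≤ u + v ∧ u + v ≤ 2 + ε ^ 2 := by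
  obtain ⟨hm₁, hm₂⟩ := one_sub_sq_le_mul_le_one_add_sq hu hv hu2 hv2 hω
  have hs2 : (u + v) ^ 2 = 2 + 2 * ε ^ 2 + 2 * (u * v) := by linear_combination hu2 + hv2
  constructor <;> nlinarith [sq_nonneg ε]

lemma cube_bounds_of_near_one {x m : ℝ} (hx : 0 ≤ x) (hx4 : x ≤ 1 / 4) (hm₁ : 1 - x ≤ m)
    (hm₂ : m ≤ 1 + x) : 27 / 64 ≤ m ^ 3 ∧ 1 - 3 * x ≤ m ^ 3 ∧ m ^ 3 ≤ 1 + 4 * x := by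
  have h₁ := pow_le_pow_left₀ (by linarith) hm₁ 3
  have h₂ := pow_le_pow_left₀ (by linarith) hm₂ 3
  refine ⟨?_, ?_, ?_⟩ <;> nlinarith [mul_nonneg hx hx, mul_nonneg (mul_nonneg hx hx) hx]

lemma abs_inv_cube_sub_inv_cube_sub_le (hu : 0 < u) (hv : 0 < v)
    (hu2 : u ^ 2 = 1 - 2 * ω + ε ^ 2) (hv2 : v ^ 2 = 1 + 2 * ω + ε ^ 2) (hω : ω ^ 2 ≤ ε ^ 2)
    (hε : ε ^ 2 ≤ 1 / 4) :
    |(u ^ 3)⁻¹ - (v ^ 3)⁻¹ - 6 * ω| ≤ 70 * |ω| * ε ^ 2 := by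
  have hX : (u ^ 3)⁻¹ - (v ^ 3)⁻¹ - 6 * ω
      = ω * (4 * (2 + 2 * ε ^ 2 + u * v) - 6 * (u + v) * (u * v) ^ 3)
        / ((u + v) * (u * v) ^ 3) := by
    rw [eq_div_iff (by positivity)]
    field_simp
    linear_combination (u ^ 2 + v ^ 2 + u * v) * (hv2 - hu2) + 4 * ω * (hu2 + hv2)
  obtain ⟨hm₁, hm₂⟩ := one_sub_sq_le_mul_le_one_add_sq hu hv hu2 hv2 hω
  obtain ⟨hs₁, hs₂⟩ := two_le_add_le_two_add_sq hu hv hu2 hv2 hω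
  obtain ⟨hm3₀, hm3₁, hm3₂⟩ := cube_bounds_of_near_one (sq_nonneg ε) hε hm₁ hm₂
  have hN : |4 * (2 + 2 * ε ^ 2 + u * v) - 6 * (u + v) * (u * v) ^ 3| ≤ 56 * ε ^ 2 := by
    rw [abs_le]; constructor <;> nlinarith
  rw [hX, abs_div, abs_mul, abs_of_pos (by positivity : 0 < (u + v) * (u * v) ^ 3)]
  calc |ω| * |4 * (2 + 2 * ε ^ 2 + u * v) - 6 * (u + v) * (u * v) ^ 3| / ((u + v) * (u * v) ^ 3)
      ≤ |ω| * (56 * ε ^ 2) / (2 * (27 / 64)) := by gcongr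
    _ ≤ 70 * |ω| * ε ^ 2 := by
      rw [div_le_iff₀ (by norm_num)]; nlinarith [mul_nonneg (abs_nonneg ω) (sq_nonneg ε)]

lemma abs_inv_cube_add_inv_cube_sub_le (hu : 0 < u) (hv : 0 < v)
    (hu2 : u ^ 2 = 1 - 2 * ω + ε ^ 2) (hv2 : v ^ 2 = 1 + 2 * ω + ε ^ 2) (hω : ω ^ 2 ≤ ε ^ 2)
    (hε : ε ^ 2 ≤ 1 / 4) :
    |(u ^ 3)⁻¹ + (v ^ 3)⁻¹ - 2| ≤ 34 * ε ^ 2 := by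
  have hY : (u ^ 3)⁻¹ + (v ^ 3)⁻¹ - 2
      = ((u + v) * (2 + 2 * ε ^ 2 - u * v) - 2 * (u * v) ^ 3) / (u * v) ^ 3 := by
    rw [eq_div_iff (by positivity)]
    field_simp
    linear_combination (u + v) * (hu2 + hv2)
  obtain ⟨hm₁, hm₂⟩ := one_sub_sq_le_mul_le_one_add_sq hu hv hu2 hv2 hω
  obtain ⟨hs₁, hs₂⟩ := two_le_add_le_two_add_sq hu hv hu2 hv2 hω
  obtain ⟨hm3₀, hm3₁, hm3₂⟩ := cube_bounds_of_near_one (sq_nonneg ε) hε hm₁ hm₂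
  have hN : |(u + v) * (2 + 2 * ε ^ 2 - u * v) - 2 * (u * v) ^ 3| ≤ 14 * ε ^ 2 := by
    rw [abs_le]; constructor <;> nlinarith
  rw [hY, abs_div, abs_of_pos (by positivity : 0 < (u * v) ^ 3)]
  calc |(u + v) * (2 + 2 * ε ^ 2 - u * v) - 2 * (u * v) ^ 3| / (u * v) ^ 3
      ≤ 14 * ε ^ 2 / (27 / 64) := by gcongr
    _ ≤ 34 * ε ^ 2 := by nlinarith [sq_nonneg ε]

end InverseCubeExpansion

lemma abs_antipodal_inv_cube_expansion_le {A B r ρ w : ℝ} (hρ : 0 < ρ) (h2ρ : 2 * ρ ≤ r)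
    (hw : |w| ≤ r) (hA : 0 ≤ A) (hB : 0 ≤ B) (hA2 : A ^ 2 = r ^ 2 - 2 * ρ * w + ρ ^ 2)
    (hB2 : B ^ 2 = r ^ 2 + 2 * ρ * w + ρ ^ 2) :
    |ρ * ((A ^ 3)⁻¹ - (B ^ 3)⁻¹) / 2 - 3 * ρ ^ 2 * w / r ^ 5| ≤ 35 * ρ ^ 4 / r ^ 6 ∧
    |ρ ^ 2 * ((A ^ 3)⁻¹ + (B ^ 3)⁻¹) / 2 - ρ ^ 2 / r ^ 3| ≤ 17 * ρ ^ 4 / r ^ 5 := by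
  have hr : 0 < r := by linarith
  obtain ⟨hw₁, hw₂⟩ := abs_le.mp hw
  have hu : 0 < A / r := div_pos (lt_of_le_of_ne hA (by rintro rfl; nlinarith)) hr
  have hv : 0 < B / r := div_pos (lt_of_le_of_ne hB (by rintro rfl; nlinarith)) hr
  have hu2 : (A / r) ^ 2 = 1 - 2 * (ρ * w / r ^ 2) + (ρ / r) ^ 2 := by
    rw [div_pow, hA2]; field_simp
  have hv2 : (B / r) ^ 2 = 1 + 2 * (ρ * w / r ^ 2) + (ρ / r) ^ 2 := by
    rw [div_pow, hB2]; field_simp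
  have hω : |ρ * w / r ^ 2| ≤ ρ / r :=
    calc |ρ * w / r ^ 2| = ρ * |w| / r ^ 2 := by
          rw [abs_div, abs_mul, abs_of_pos hρ, abs_of_pos (by positivity : (0 : ℝ) < r ^ 2)]
      _ ≤ ρ * r / r ^ 2 := by gcongr
      _ = ρ / r := by field_simp
  have hω2 : (ρ * w / r ^ 2) ^ 2 ≤ (ρ / r) ^ 2 := sq_le_sq' (abs_le.mp hω).1 (abs_le.mp hω).2
  have hε : (ρ / r) ^ 2 ≤ 1 / 4 := by
    rw [div_pow, div_le_iff₀ (by positivity)]; nlinarith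
  constructor
  · have hP : ρ * ((A ^ 3)⁻¹ - (B ^ 3)⁻¹) / 2 - 3 * ρ ^ 2 * w / r ^ 5
        = ρ / (2 * r ^ 3) * (((A / r) ^ 3)⁻¹ - ((B / r) ^ 3)⁻¹ - 6 * (ρ * w / r ^ 2)) := by
      field_simp; ring
    rw [hP, abs_mul, abs_of_pos (by positivity)]
    calc ρ / (2 * r ^ 3) * |((A / r) ^ 3)⁻¹ - ((B / r) ^ 3)⁻¹ - 6 * (ρ * w / r ^ 2)|
        ≤ ρ / (2 * r ^ 3) * (70 * (ρ / r) * (ρ / r) ^ 2) := by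
          gcongr
          exact (abs_inv_cube_sub_inv_cube_sub_le hu hv hu2 hv2 hω2 hε).trans (by gcongr)
      _ = 35 * ρ ^ 4 / r ^ 6 := by field_simp; ring
  · have hQ : ρ ^ 2 * ((A ^ 3)⁻¹ + (B ^ 3)⁻¹) / 2 - ρ ^ 2 / r ^ 3
        = ρ ^ 2 / (2 * r ^ 3) * (((A / r) ^ 3)⁻¹ + ((B / r) ^ 3)⁻¹ - 2) := by
      field_simp
    rw [hQ, abs_mul, abs_of_pos (by positivity)]
    calc ρ ^ 2 / (2 * r ^ 3) * |((A / r) ^ 3)⁻¹ + ((B / r) ^ 3)⁻¹ - 2|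
        ≤ ρ ^ 2 / (2 * r ^ 3) * (34 * (ρ / r) ^ 2) := by
          gcongr; exact abs_inv_cube_add_inv_cube_sub_le hu hv hu2 hv2 hω2 hε
      _ = 17 * ρ ^ 4 / r ^ 5 := by field_simp; ring

noncomputable def circ (t : ℝ) : Fin 3 → ℝ := ![cos t, sin t, 0]

noncomputable def circTangent (t : ℝ) : Fin 3 → ℝ := ![-sin t, cos t, 0]

@[fun_prop]
lemma continuous_circ : Continuous circ := by
  unfold circ; fun_prop

@[fun_prop]
lemma continuous_circTangent : Continuous circTangent := by
  unfold circTangent; fun_prop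

lemma circ_periodic : Function.Periodic circ (2 * π) := by
  intro t; simp [circ]

lemma circTangent_periodic : Function.Periodic circTangent (2 * π) := by
  intro t; simp [circTangent]

lemma circ_add_pi (t : ℝ) : circ (t + π) = -circ t := by
  simp [circ, cos_add_pi, sin_add_pi]

lemma circTangent_add_pi (t : ℝ) : circTangent (t + π) = -circTangent t := by
  simp [circTangent, cos_add_pi, sin_add_pi]

lemma enorm'_circ (t : ℝ) : enorm' (circ t) = 1 := by
  simp [enorm', circ, Fin.sum_univ_three]

lemma enorm'_circTangent (t : ℝ) : enorm' (circTangent t) = 1 := by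
  simp [enorm', circTangent, Fin.sum_univ_three]

lemma enorm'_e₃ : enorm' e₃ = 1 := by
  simp [enorm', Fin.sum_univ_three]

lemma circTangent_cross_circ (t : ℝ) : circTangent t ⨯₃ circ t = -e₃ := by
  simp only [circTangent, circ, cross_apply]
  ext i; fin_cases i <;> simp; linear_combination -sin_sq_add_cos_sq t

lemma enorm'_sub_smul_circ_pos {ρ : ℝ} {R : Fin 3 → ℝ} (h : |ρ| < enorm' R) (t : ℝ) :
    0 < enorm' (R - ρ • circ t) := by
  have := enorm'_sub_enorm'_le R (ρ • circ t)
  rw [enorm'_smul, enorm'_circ, mul_one] at this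
  linarith

lemma dotProduct_circ_smul_circTangent_cross (R : Fin 3 → ℝ) (t : ℝ) :
    (circ t ⬝ᵥ R) • circTangent t ⨯₃ R
      = cos t ^ 2 • ![R 0 * R 2, 0, -R 0 ^ 2]
        + (sin t * cos t) • ![R 1 * R 2, R 0 * R 2, -(2 * R 0 * R 1)]
        + sin t ^ 2 • ![0, R 1 * R 2, -R 1 ^ 2] := by
  ext i
  fin_cases i <;> simp [circ, circTangent, cross_apply, vecHead, vecTail] <;> ring

lemma integral_dotProduct_circ_smul_circTangent_cross (R : Fin 3 → ℝ) :
    ∫ t in (0 : ℝ)..2 * π, (circ t ⬝ᵥ R) • circTangent t ⨯₃ R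
      = π • (R 2 • R - (R ⬝ᵥ R) • e₃) := by
  simp only [dotProduct_circ_smul_circTangent_cross, integral_trig_quadratic]
  congr 1
  ext i
  fin_cases i <;> simp [vec3_dotProduct] <;> ring

noncomputable def loopIntegrand (ρ : ℝ) (R : Fin 3 → ℝ) (t : ℝ) : Fin 3 → ℝ :=
  (enorm' (R - ρ • circ t) ^ 3)⁻¹ • (ρ • circTangent t) ⨯₃ (R - ρ • circ t)

/-- The leading part of `(loopIntegrand ρ R t + loopIntegrand ρ R (t + π)) / 2`, obtained from
`|R ∓ ρ c(t)|⁻³ ≈ r⁻³ ± 3ρ (c(t) ⬝ R)/r⁵`. -/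
noncomputable def dipoleIntegrand (ρ : ℝ) (R : Fin 3 → ℝ) (t : ℝ) : Fin 3 → ℝ :=
  (3 * ρ ^ 2 / enorm' R ^ 5) • ((circ t ⬝ᵥ R) • circTangent t ⨯₃ R)
    + (ρ ^ 2 / enorm' R ^ 3) • e₃

lemma loopIntegrand_eq (ρ : ℝ) (R : Fin 3 → ℝ) (t : ℝ) :
    loopIntegrand ρ R t
      = (enorm' (R - ρ • circ t) ^ 3)⁻¹ • (ρ • circTangent t ⨯₃ R + ρ ^ 2 • e₃) := by
  rw [loopIntegrand, map_smul, map_sub, map_smul, LinearMap.smul_apply, LinearMap.smul_apply,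
    circTangent_cross_circ]
  module

lemma loopIntegrand_periodic (ρ : ℝ) (R : Fin 3 → ℝ) :
    Function.Periodic (loopIntegrand ρ R) (2 * π) := by
  intro t
  simp only [loopIntegrand, circ_periodic t, circTangent_periodic t]

lemma continuous_loopIntegrand {ρ : ℝ} {R : Fin 3 → ℝ} (h : |ρ| < enorm' R) :
    Continuous (loopIntegrand ρ R) := by
  have hdist : Continuous fun t => enorm' (R - ρ • circ t) :=
    continuous_enorm'.comp (by fun_prop)
  refine ((hdist.pow 3).inv₀ fun t => pow_ne_zero 3 (enorm'_sub_smul_circ_pos h t).ne').smul ?_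
  fun_prop

lemma continuous_dipoleIntegrand (ρ : ℝ) (R : Fin 3 → ℝ) : Continuous (dipoleIntegrand ρ R) := by
  unfold dipoleIntegrand
  fun_prop

lemma average_loopIntegrand_sub_dipoleIntegrand (ρ : ℝ) (R : Fin 3 → ℝ) (t : ℝ) :
    (2 : ℝ)⁻¹ • (loopIntegrand ρ R t + loopIntegrand ρ R (t + π)) - dipoleIntegrand ρ R t
      = (ρ * ((enorm' (R - ρ • circ t) ^ 3)⁻¹ - (enorm' (R - ρ • circ (t + π)) ^ 3)⁻¹) / 2
          - 3 * ρ ^ 2 * (circ t ⬝ᵥ R) / enorm' R ^ 5) • circTangent t ⨯₃ R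
        + (ρ ^ 2 * ((enorm' (R - ρ • circ t) ^ 3)⁻¹ + (enorm' (R - ρ • circ (t + π)) ^ 3)⁻¹) / 2
          - ρ ^ 2 / enorm' R ^ 3) • e₃ := by
  rw [loopIntegrand_eq, loopIntegrand_eq, dipoleIntegrand, circTangent_add_pi]
  simp only [map_neg, LinearMap.neg_apply]
  module

lemma integral_dipoleIntegrand (ρ : ℝ) {R : Fin 3 → ℝ} (hR : enorm' R ≠ 0) :
    ∫ t in (0 : ℝ)..2 * π, dipoleIntegrand ρ R t = (π * ρ ^ 2) • (Dmat R *ᵥ e₃) := by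
  unfold dipoleIntegrand
  rw [intervalIntegral.integral_add (Continuous.intervalIntegrable (by fun_prop) _ _)
      intervalIntegrable_const,
    intervalIntegral.integral_smul, integral_dotProduct_circ_smul_circTangent_cross,
    intervalIntegral.integral_const, sub_zero, Dmat_mulVec, ← sq_enorm',
    show R ⬝ᵥ e₃ = R 2 by simp [dotProduct, Fin.sum_univ_three]]
  match_scalars
  · field_simp
  · field_simp; ring

lemma enorm'_average_loopIntegrand_sub_dipoleIntegrand_le {ρ : ℝ} {R : Fin 3 → ℝ} (hρ : 0 < ρ)
    (h2ρ : 2 * ρ ≤ enorm' R) (t : ℝ) :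
    enorm' ((2 : ℝ)⁻¹ • (loopIntegrand ρ R t + loopIntegrand ρ R (t + π)) - dipoleIntegrand ρ R t)
      ≤ 52 * ρ ^ 4 / enorm' R ^ 5 := by
  set r := enorm' R
  have hr : 0 < r := by linarith
  have hw : |circ t ⬝ᵥ R| ≤ r := by simpa [enorm'_circ] using abs_dotProduct_le (circ t) R
  have hA2 : enorm' (R - ρ • circ t) ^ 2 = r ^ 2 - 2 * ρ * (circ t ⬝ᵥ R) + ρ ^ 2 := by
    rw [sq_enorm'_sub, enorm'_smul, enorm'_circ, dotProduct_smul, dotProduct_comm, abs_of_pos hρ,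
      smul_eq_mul]
    ring
  have hB2 : enorm' (R - ρ • circ (t + π)) ^ 2 = r ^ 2 + 2 * ρ * (circ t ⬝ᵥ R) + ρ ^ 2 := by
    rw [circ_add_pi, smul_neg, ← neg_smul, sq_enorm'_sub, enorm'_smul, enorm'_circ,
      dotProduct_smul, dotProduct_comm, abs_neg, abs_of_pos hρ, smul_eq_mul]
    ring
  obtain ⟨hP, hQ⟩ := abs_antipodal_inv_cube_expansion_le hρ h2ρ hw (enorm'_nonneg _)
    (enorm'_nonneg _) hA2 hB2
  have hX : enorm' (circTangent t ⨯₃ R) ≤ r :=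
    (enorm'_crossProduct_le _ _).trans_eq (by rw [enorm'_circTangent, one_mul])
  rw [average_loopIntegrand_sub_dipoleIntegrand]
  refine (enorm'_add_le _ _).trans ?_
  rw [enorm'_smul, enorm'_smul, enorm'_e₃, mul_one]
  calc _ ≤ 35 * ρ ^ 4 / r ^ 6 * r + 17 * ρ ^ 4 / r ^ 5 :=
        add_le_add (mul_le_mul hP hX (enorm'_nonneg _) (by positivity)) hQ
    _ = 52 * ρ ^ 4 / r ^ 5 := by field_simp; ring

lemma enorm'_integral_loopIntegrand_sub_dipole_le {ρ : ℝ} {R : Fin 3 → ℝ} (hρ : 0 < ρ)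
    (h2ρ : 2 * ρ ≤ enorm' R) :
    enorm' ((∫ t in (0 : ℝ)..2 * π, loopIntegrand ρ R t) - (π * ρ ^ 2) • (Dmat R *ᵥ e₃))
      ≤ 104 * π * ρ ^ 4 / enorm' R ^ 5 := by
  have hG := continuous_loopIntegrand (R := R) (by rw [abs_of_pos hρ]; linarith)
  have hGavg : Continuous fun t => (2 : ℝ)⁻¹ • (loopIntegrand ρ R t + loopIntegrand ρ R (t + π)) :=
    by fun_prop
  have hD := continuous_dipoleIntegrand ρ R
  rw [(loopIntegrand_periodic ρ R).intervalIntegral_eq_integral_average_shift hG π,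
    ← integral_dipoleIntegrand ρ (by linarith : 0 < enorm' R).ne',
    ← intervalIntegral.integral_sub (hGavg.intervalIntegrable _ _) (hD.intervalIntegrable _ _)]
  calc _ ≤ 52 * ρ ^ 4 / enorm' R ^ 5 * |2 * π - 0| :=
        enorm'_intervalIntegral_le ((hGavg.sub hD).intervalIntegrable _ _)
          fun t _ => enorm'_average_loopIntegrand_sub_dipoleIntegrand_le hρ h2ρ t
    _ = 104 * π * ρ ^ 4 / enorm' R ^ 5 := by
        rw [sub_zero, abs_of_pos two_pi_pos]; ring

/-- Dipole approximation of the Biot–Savart field of a circular current loop of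
radius `ρ` centered at `a` with normal `e₃`, carrying current `J`: away from the
loop (at distance at least `2ρ` from `a`), the field differs from the dipole field
`(μ₀/4π) D(x − a) α`, with dipole moment `α = π ρ² J e₃`, by at most
`C μ₀ |J| ρ⁴ / |x − a|⁵`, where `C` is independent of `ρ`, `a`, `J`, `μ₀` and `x`. -/
theorem biot_savart_dipole_approx :
    ∃ C > (0 : ℝ), ∀ (μ₀ J ρ : ℝ) (a x : Fin 3 → ℝ), 0 < μ₀ → 0 < ρ →
      2 * ρ ≤ enorm' (x - a) →
      let γ : ℝ → Fin 3 → ℝ := fun t => a + ρ • ![Real.cos t, Real.sin t, 0]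
      let γ' : ℝ → Fin 3 → ℝ := fun t => ρ • ![-Real.sin t, Real.cos t, 0]
      let B : Fin 3 → ℝ := (μ₀ * J / (4 * Real.pi)) •
        ∫ t in (0 : ℝ)..(2 * Real.pi),
          (enorm' (x - γ t) ^ 3)⁻¹ • crossProduct (γ' t) (x - γ t)
      let α : Fin 3 → ℝ := (Real.pi * ρ ^ 2 * J) • ![0, 0, 1]
      enorm' (B - (μ₀ / (4 * Real.pi)) • (Dmat (x - a) *ᵥ α)) ≤
        C * μ₀ * |J| * ρ ^ 4 / enorm' (x - a) ^ 5 := by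
  refine ⟨26, by norm_num, fun μ₀ J ρ a x hμ₀ hρ h2ρ => ?_⟩
  intro γ γ' B α
  have hB : B = (μ₀ * J / (4 * π)) • ∫ t in (0 : ℝ)..2 * π, loopIntegrand ρ (x - a) t := by
    simp only [B, γ, γ', loopIntegrand, circ, circTangent, sub_add_eq_sub_sub]
  have hα : (μ₀ / (4 * π)) • (Dmat (x - a) *ᵥ α)
      = (μ₀ * J / (4 * π)) • (π * ρ ^ 2) • (Dmat (x - a) *ᵥ e₃) := by
    simp only [α, mulVec_smul, smul_smul]
    ring_nf
  rw [hB, hα, ← smul_sub, enorm'_smul, abs_div, abs_mul, abs_of_pos hμ₀,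
    abs_of_pos (by positivity : 0 < 4 * π)]
  calc _ ≤ μ₀ * |J| / (4 * π) * (104 * π * ρ ^ 4 / enorm' (x - a) ^ 5) := by
        gcongr; exact enorm'_integral_loopIntegrand_sub_dipole_le hρ h2ρ
    _ = 26 * μ₀ * |J| * ρ ^ 4 / enorm' (x - a) ^ 5 := by field_simp; ring
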